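/- Let M = XXᵀ ∈ ℝ^{n×n} be a rank-r positive semidefinite matrix with X ∈ ℝ^{n×r}, κ = σ₁(M)/σ_r(M), and b = 𝒜(M). Assume 𝒜 satisfies 6r-RIP with constant δ_{6r} ≤ 1/10. Define the projected gradient iterates M̃₀ = 0 and, for each τ ≥ 0, let M̃_{τ+1} be any minimizer of ‖N − (M̃_τ − Σ_{k=1}^m (⟨A_k, M̃_τ⟩ − b_k) A_k)‖_F over positive semidefinite matrices N of rank at most r. Then for any integer T₀ ≥ log(√r·κ) + 2 and any U₀ ∈ ℝ^{n×r} with U₀U₀ᵀ = M̃_{T₀}, we have dist(U₀, X) ≤ (1/4)σ_r(X). -/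

import Mathlib

open Matrix

noncomputable def vnorm {ι : Type*} [Fintype ι] (v : ι → ℝ) : ℝ :=
  Real.sqrt (∑ i, v i ^ 2)

noncomputable def frob {α β : Type*} [Fintype α] [Fintype β] (M : Matrix α β ℝ) : ℝ :=
  Real.sqrt (∑ i, ∑ j, M i j ^ 2)

noncomputable def sval {α β : Type*} [Fintype α] [Fintype β] (M : Matrix α β ℝ) (k : ℕ) : ℝ :=
  sSup { t : ℝ | ∃ V : Submodule ℝ (β → ℝ), Module.finrank ℝ V = k ∧
    ∀ v ∈ V, t * vnorm v ≤ vnorm (M.mulVec v) }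

noncomputable def opNorm {α β : Type*} [Fintype α] [Fintype β] (M : Matrix α β ℝ) : ℝ :=
  sval M 1

noncomputable def pdist {α ρ : Type*} [Fintype α] [Fintype ρ] [DecidableEq ρ]
    (U X : Matrix α ρ ℝ) : ℝ :=
  sInf { d : ℝ | ∃ R : Matrix ρ ρ ℝ, Rᵀ * R = 1 ∧ d = frob (U - X * R) }

noncomputable def mip {α β : Type*} [Fintype α] [Fintype β] (A B : Matrix α β ℝ) : ℝ :=
  ∑ i, ∑ j, A i j * B i j

noncomputable def mapA {m : ℕ} {α β : Type*} [Fintype α] [Fintype β]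
    (A : Fin m → Matrix α β ℝ) (Z : Matrix α β ℝ) : Fin m → ℝ :=
  fun k => mip (A k) Z

def HasRIP {m n₁ n₂ : ℕ} (A : Fin m → Matrix (Fin n₁) (Fin n₂) ℝ) (s : ℕ) (δ : ℝ) : Prop :=
  ∀ Z : Matrix (Fin n₁) (Fin n₂) ℝ, Z.rank ≤ s →
    (1 - δ) * frob Z ^ 2 ≤ ∑ k, mapA A Z k ^ 2 ∧
      ∑ k, mapA A Z k ^ 2 ≤ (1 + δ) * frob Z ^ 2

noncomputable def gradU {m n₁ n₂ r : ℕ} (A : Fin m → Matrix (Fin n₁) (Fin n₂) ℝ)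
    (M : Matrix (Fin n₁) (Fin n₂) ℝ)
    (U : Matrix (Fin n₁) (Fin r) ℝ) (V : Matrix (Fin n₂) (Fin r) ℝ) :
    Matrix (Fin n₁) (Fin r) ℝ :=
  (∑ k, mip (A k) (U * Vᵀ - M) • (A k * V)) + (1 / 4 : ℝ) • (U * (Uᵀ * U - Vᵀ * V))

noncomputable def gradV {m n₁ n₂ r : ℕ} (A : Fin m → Matrix (Fin n₁) (Fin n₂) ℝ)
    (M : Matrix (Fin n₁) (Fin n₂) ℝ)
    (U : Matrix (Fin n₁) (Fin r) ℝ) (V : Matrix (Fin n₂) (Fin r) ℝ) :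
    Matrix (Fin n₂) (Fin r) ℝ :=
  (∑ k, mip (A k) (U * Vᵀ - M) • ((A k)ᵀ * U)) + (1 / 4 : ℝ) • (V * (Vᵀ * V - Uᵀ * U))

noncomputable def gradg {m n₁ n₂ r : ℕ} (A : Fin m → Matrix (Fin n₁) (Fin n₂) ℝ)
    (M : Matrix (Fin n₁) (Fin n₂) ℝ)
    (U : Matrix (Fin n₁) (Fin r) ℝ) (V : Matrix (Fin n₂) (Fin r) ℝ) :
    Matrix (Fin n₁ ⊕ Fin n₂) (Fin r) ℝ :=
  Matrix.fromRows (gradU A M U V) (gradV A M U V)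

/-
Projected gradient descent contracts the error. If `W = M̃_{τ+1} - M` and `Z = M̃_τ - M`, then
`M̃_{τ+1}` is at least as close as `M` to the gradient point, which gives
`‖W‖² ≤ 2 (⟨W, Z⟩ - ⟨𝒜 W, 𝒜 Z⟩)`; polarizing RIP on `W ± Z` bounds the right side by
`δ (‖W‖² + ‖Z‖²)`, so for `δ ≤ 1/10` the squared error drops by a factor `1/9` per step.
With `λ` the least eigenvalue of `XᵀX` (which is `σ_r(M)`), `‖M‖_F ≤ √r κ λ`, so after `T₀` steps
`‖U₀U₀ᵀ - XXᵀ‖_F ≤ λ / 4`. Let `R` be the polar factor of `XᵀU₀`; then `S = (XR)ᵀU₀` is symmetric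
with `S ⪰ (λ/2) I`, and the identity
`‖UUᵀ - VVᵀ‖² - 2 ⟨(U - V)ᵀ(U - V), S⟩ = ‖UᵀU - S‖² + ‖VᵀV - S‖²` (with `V = XR`) gives
`λ ‖U₀ - XR‖² ≤ ‖U₀U₀ᵀ - XXᵀ‖² ≤ λ² / 16`, i.e. `dist(U₀, X) ≤ √λ / 4 ≤ σ_r(X) / 4`.
-/

section FrobeniusInner

variable {α β ρ : Type*} [Fintype α] [Fintype β] [Fintype ρ]

lemma mip_eq_sum_dotProduct (A B : Matrix α β ℝ) : mip A B = ∑ i, A i ⬝ᵥ B i := rfl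

lemma mip_comm (A B : Matrix α β ℝ) : mip A B = mip B A := by
  simp only [mip_eq_sum_dotProduct, dotProduct_comm]

lemma mip_add_left (A B C : Matrix α β ℝ) : mip (A + B) C = mip A C + mip B C := by
  simp only [mip, Matrix.add_apply, add_mul, Finset.sum_add_distrib]

lemma mip_add_right (A B C : Matrix α β ℝ) : mip A (B + C) = mip A B + mip A C := by
  rw [mip_comm, mip_add_left, mip_comm B, mip_comm C]

lemma mip_sub_left (A B C : Matrix α β ℝ) : mip (A - B) C = mip A C - mip B C := by
  simp only [mip, Matrix.sub_apply, sub_mul, Finset.sum_sub_distrib]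

lemma mip_sub_right (A B C : Matrix α β ℝ) : mip A (B - C) = mip A B - mip A C := by
  rw [mip_comm, mip_sub_left, mip_comm B, mip_comm C]

lemma mip_smul_right (c : ℝ) (A B : Matrix α β ℝ) : mip A (c • B) = c * mip A B := by
  simp only [mip, Matrix.smul_apply, smul_eq_mul, Finset.mul_sum, mul_left_comm c]

lemma mip_sum_right {ι : Type*} (s : Finset ι) (A : Matrix α β ℝ) (B : ι → Matrix α β ℝ) :
    mip A (∑ k ∈ s, B k) = ∑ k ∈ s, mip A (B k) := by
  induction s using Finset.cons_induction with
  | empty => simp [mip]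
  | cons k s hk ih => rw [Finset.sum_cons, Finset.sum_cons, mip_add_right, ih]

lemma frob_nonneg (A : Matrix α β ℝ) : 0 ≤ frob A := Real.sqrt_nonneg _

lemma frob_sq (A : Matrix α β ℝ) : frob A ^ 2 = mip A A := by
  rw [frob, Real.sq_sqrt (by positivity)]
  simp only [mip, sq]

lemma frob_neg (A : Matrix α β ℝ) : frob (-A) = frob A := by
  simp [frob]

lemma frob_add_sq (A B : Matrix α β ℝ) :
    frob (A + B) ^ 2 = frob A ^ 2 + 2 * mip A B + frob B ^ 2 := by
  simp only [frob_sq, mip_add_left, mip_add_right, mip_comm B A]; ring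

lemma frob_sub_sq (A B : Matrix α β ℝ) :
    frob (A - B) ^ 2 = frob A ^ 2 - 2 * mip A B + frob B ^ 2 := by
  simp only [frob_sq, mip_sub_left, mip_sub_right, mip_comm B A]; ring

lemma mip_eq_trace (A B : Matrix α β ℝ) : mip A B = (Aᵀ * B).trace := by
  simp only [mip, Matrix.trace, Matrix.diag, Matrix.mul_apply, Matrix.transpose_apply]
  exact Finset.sum_comm

lemma mip_mul_transpose_self (P : Matrix α β ℝ) (Q : Matrix α ρ ℝ) :
    mip (P * Pᵀ) (Q * Qᵀ) = frob (Pᵀ * Q) ^ 2 := by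
  rw [frob_sq, mip_eq_trace, mip_eq_trace, Matrix.transpose_mul, Matrix.transpose_transpose,
    Matrix.transpose_mul, Matrix.transpose_transpose]
  calc (P * Pᵀ * (Q * Qᵀ)).trace = ((Pᵀ * (Q * Qᵀ)) * P).trace := by
        rw [Matrix.mul_assoc, Matrix.trace_mul_comm]
    _ = ((Qᵀ * P) * (Pᵀ * Q)).trace := by
        rw [Matrix.trace_mul_comm (Qᵀ * P)]; simp only [Matrix.mul_assoc]

lemma mip_transpose_mul_self (Δ : Matrix α β ℝ) (S : Matrix β β ℝ) :
    mip (Δᵀ * Δ) S = ∑ i, Δ i ⬝ᵥ (S *ᵥ Δ i) := by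
  rw [mip_eq_trace, Matrix.transpose_mul, Matrix.transpose_transpose, Matrix.mul_assoc,
    Matrix.trace_mul_comm]
  simp only [Matrix.trace, Matrix.diag, Matrix.mul_apply, Matrix.transpose_apply, dotProduct,
    Matrix.mulVec, Finset.mul_sum, Finset.sum_mul]
  exact Finset.sum_congr rfl fun i _ => Finset.sum_comm.trans
    (Finset.sum_congr rfl fun a _ => Finset.sum_congr rfl fun b _ => by ring)

end FrobeniusInner

section EuclideanNorm

variable {ι κ : Type*} [Fintype ι] [Fintype κ]

lemma vnorm_nonneg (v : ι → ℝ) : 0 ≤ vnorm v := Real.sqrt_nonneg _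

@[simp]
lemma vnorm_zero : vnorm (0 : ι → ℝ) = 0 := by simp [vnorm]

lemma vnorm_sq (v : ι → ℝ) : vnorm v ^ 2 = v ⬝ᵥ v := by
  rw [vnorm, Real.sq_sqrt (by positivity)]
  simp only [dotProduct, sq]

lemma vnorm_pos {v : ι → ℝ} (hv : v ≠ 0) : 0 < vnorm v := by
  refine lt_of_le_of_ne (vnorm_nonneg v) fun h => hv ?_
  rw [← dotProduct_self_eq_zero, ← vnorm_sq, ← h, sq, zero_mul]

lemma vnorm_smul (c : ℝ) (v : ι → ℝ) : vnorm (c • v) = |c| * vnorm v := by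
  rw [← Real.sqrt_sq_eq_abs, vnorm, vnorm, ← Real.sqrt_mul (sq_nonneg c), Finset.mul_sum]
  simp only [Pi.smul_apply, smul_eq_mul, mul_pow]

lemma dotProduct_le_vnorm_mul_vnorm (v w : ι → ℝ) : v ⬝ᵥ w ≤ vnorm v * vnorm w :=
  Real.sum_mul_le_sqrt_mul_sqrt Finset.univ v w

lemma vnorm_mulVec_le (M : Matrix ι κ ℝ) (v : κ → ℝ) : vnorm (M *ᵥ v) ≤ frob M * vnorm v := by
  rw [vnorm, frob, vnorm, ← Real.sqrt_mul (by positivity), Finset.sum_mul]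
  exact Real.sqrt_le_sqrt (Finset.sum_le_sum fun i _ =>
    Finset.sum_mul_sq_le_sq_mul_sq _ _ _)

lemma mul_vnorm_le_vnorm {c : ℝ} (hc : 0 ≤ c)
    {v : ι → ℝ} {w : κ → ℝ} (h : c ^ 2 * (v ⬝ᵥ v) ≤ w ⬝ᵥ w) : c * vnorm v ≤ vnorm w := by
  refine (pow_le_pow_iff_left₀ (by have := vnorm_nonneg v; positivity) (vnorm_nonneg w)
    two_ne_zero).mp ?_
  rwa [mul_pow, vnorm_sq, vnorm_sq]

lemma dotProduct_mulVec_self (X : Matrix ι κ ℝ) (v : κ → ℝ) :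
    (X *ᵥ v) ⬝ᵥ (X *ᵥ v) = v ⬝ᵥ ((Xᵀ * X) *ᵥ v) := by
  conv_rhs => rw [← Matrix.mulVec_mulVec, Matrix.dotProduct_mulVec, Matrix.vecMul_transpose]

lemma dotProduct_transpose_mul_mul_mulVec (X : Matrix ι κ ℝ) (M : Matrix ι ι ℝ) (v : κ → ℝ) :
    v ⬝ᵥ ((Xᵀ * M * X) *ᵥ v) = (X *ᵥ v) ⬝ᵥ (M *ᵥ (X *ᵥ v)) := by
  rw [← Matrix.mulVec_mulVec, ← Matrix.mulVec_mulVec, Matrix.dotProduct_mulVec,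
    Matrix.vecMul_transpose]

end EuclideanNorm

section Rank

variable {α β : Type*} [Fintype β]

lemma Matrix.rank_add_le (A B : Matrix α β ℝ) : (A + B).rank ≤ A.rank + B.rank := by
  unfold Matrix.rank
  rw [Matrix.mulVecLin_add]
  calc Module.finrank ℝ (LinearMap.range (A.mulVecLin + B.mulVecLin))
      ≤ Module.finrank ℝ ↥(LinearMap.range A.mulVecLin ⊔ LinearMap.range B.mulVecLin) :=
        Submodule.finrank_mono (LinearMap.range_add_le _ _)
    _ ≤ _ := Submodule.finrank_add_le_finrank_add_finrank _ _

lemma Matrix.rank_neg (A : Matrix α β ℝ) : (-A).rank = A.rank := by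
  unfold Matrix.rank
  have h : (-A).mulVecLin = -A.mulVecLin := by ext v; simp
  rw [h, LinearMap.range_neg]

lemma Matrix.rank_sub_le (A B : Matrix α β ℝ) : (A - B).rank ≤ A.rank + B.rank := by
  simpa only [sub_eq_add_neg, Matrix.rank_neg] using Matrix.rank_add_le A (-B)

lemma Matrix.mulVec_injective_of_rank_eq_card {X : Matrix α β ℝ}
    (hX : X.rank = Fintype.card β) : Function.Injective X.mulVec := by
  have h := X.mulVecLin.finrank_range_add_finrank_ker
  rw [Module.finrank_fintype_fun_eq_card, ← Matrix.rank, hX, Nat.add_eq_left,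
    Submodule.finrank_eq_zero] at h
  exact LinearMap.ker_eq_bot.mp h

end Rank

section Spectral

variable {ρ : Type*} [Fintype ρ] [DecidableEq ρ]

lemma exists_orthogonal_diagonalization {C : Matrix ρ ρ ℝ} (hC : C.IsHermitian) :
    ∃ (U : Matrix ρ ρ ℝ) (d : ρ → ℝ), Uᵀ * U = 1 ∧ U * Uᵀ = 1 ∧ C = U * diagonal d * Uᵀ := by
  have hunit := hC.eigenvectorUnitary.2
  refine ⟨hC.eigenvectorUnitary, hC.eigenvalues, ?_, ?_, ?_⟩
  · simpa [Matrix.star_eq_conjTranspose] using (Matrix.mem_unitaryGroup_iff').mp hunit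
  · simpa [Matrix.star_eq_conjTranspose] using (Matrix.mem_unitaryGroup_iff).mp hunit
  · simpa [Matrix.star_eq_conjTranspose, Function.comp_def] using hC.spectral_theorem

variable {U : Matrix ρ ρ ℝ}

lemma dotProduct_conj_diagonal_mulVec (d : ρ → ℝ) (v : ρ → ℝ) :
    v ⬝ᵥ ((U * diagonal d * Uᵀ) *ᵥ v) = ∑ i, d i * (Uᵀ *ᵥ v) i ^ 2 := by
  rw [← Matrix.mulVec_mulVec, ← Matrix.mulVec_mulVec, Matrix.dotProduct_mulVec,
    ← Matrix.mulVec_transpose]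
  simp only [dotProduct, Matrix.mulVec_diagonal]
  exact Finset.sum_congr rfl fun i _ => by ring

lemma le_dotProduct_conj_diagonal_mulVec (hU : U * Uᵀ = 1) {d : ρ → ℝ} {c : ℝ}
    (hd : ∀ i, c ≤ d i) (v : ρ → ℝ) :
    c * (v ⬝ᵥ v) ≤ v ⬝ᵥ ((U * diagonal d * Uᵀ) *ᵥ v) := by
  have hnorm : v ⬝ᵥ v = ∑ i, (Uᵀ *ᵥ v) i ^ 2 := by
    have h := dotProduct_mulVec_self Uᵀ v
    rw [Matrix.transpose_transpose, hU, Matrix.one_mulVec] at h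
    rw [← h]
    simp only [dotProduct, sq]
  rw [dotProduct_conj_diagonal_mulVec, hnorm, Finset.mul_sum]
  exact Finset.sum_le_sum fun i _ => mul_le_mul_of_nonneg_right (hd i) (sq_nonneg _)

lemma conj_diagonal_mul_conj_diagonal (hU : Uᵀ * U = 1) (d e : ρ → ℝ) :
    (U * diagonal d * Uᵀ) * (U * diagonal e * Uᵀ) = U * diagonal (d * e) * Uᵀ := by
  calc (U * diagonal d * Uᵀ) * (U * diagonal e * Uᵀ)
      = U * diagonal d * (Uᵀ * U) * diagonal e * Uᵀ := by simp only [Matrix.mul_assoc]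
    _ = U * diagonal (d * e) * Uᵀ := by
        rw [hU, Matrix.mul_one, Matrix.mul_assoc U, Matrix.diagonal_mul_diagonal']
        rfl

lemma conj_diagonal_mulVec_col (hU : Uᵀ * U = 1) (d : ρ → ℝ) (i : ρ) :
    (U * diagonal d * Uᵀ) *ᵥ (fun j => U j i) = d i • fun j => U j i := by
  have hcol : (fun j => U j i) = U *ᵥ Pi.single i 1 := by
    ext j; simp [Matrix.mulVec_single]
  rw [hcol, Matrix.mulVec_mulVec, Matrix.mul_assoc, Matrix.mul_assoc, hU, Matrix.mul_one,
    ← Matrix.mulVec_mulVec, Matrix.diagonal_mulVec_single, mul_one, ← Matrix.mulVec_smul,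
    ← Pi.single_smul, smul_eq_mul, mul_one]

lemma col_dotProduct_self (hU : Uᵀ * U = 1) (i : ρ) :
    (fun j => U j i) ⬝ᵥ (fun j => U j i) = 1 := by
  simpa [Matrix.mul_apply, dotProduct] using congrFun (congrFun hU i) i

lemma transpose_conj_diagonal (d : ρ → ℝ) : (U * diagonal d * Uᵀ)ᵀ = U * diagonal d * Uᵀ := by
  simp only [Matrix.transpose_mul, Matrix.transpose_transpose, Matrix.diagonal_transpose,
    Matrix.mul_assoc]

lemma frob_conj_diagonal_sq (hU : Uᵀ * U = 1) (d : ρ → ℝ) :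
    frob (U * diagonal d * Uᵀ) ^ 2 = ∑ i, d i ^ 2 := by
  rw [frob_sq, mip_eq_trace, transpose_conj_diagonal, conj_diagonal_mul_conj_diagonal hU,
    Matrix.trace_mul_cycle,
    hU, Matrix.one_mul, Matrix.trace_diagonal]
  simp only [Pi.mul_apply, sq]

end Spectral

section SingularValues

variable {α β ρ : Type*} [Fintype α] [Fintype β] [Fintype ρ]

lemma sval_zero (M : Matrix α β ℝ) : sval M 0 = 0 := by
  have h : { t : ℝ | ∃ V : Submodule ℝ (β → ℝ), Module.finrank ℝ V = 0 ∧
      ∀ v ∈ V, t * vnorm v ≤ vnorm (M *ᵥ v) } = Set.univ :=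
    Set.eq_univ_of_forall fun t => ⟨⊥, finrank_bot ℝ _, fun v hv => by
      simp [(Submodule.mem_bot ℝ).1 hv]⟩
  rw [sval, h, Real.sSup_univ]

lemma le_sval (M : Matrix α β ℝ) {k : ℕ} (hk : 0 < k) (V : Submodule ℝ (β → ℝ))
    (hV : Module.finrank ℝ V = k) {t : ℝ} (ht : ∀ v ∈ V, t * vnorm v ≤ vnorm (M *ᵥ v)) :
    t ≤ sval M k := by
  refine le_csSup ⟨frob M, ?_⟩ ⟨V, hV, ht⟩
  rintro s ⟨W, hW, hs⟩
  obtain ⟨w, hwW, hw⟩ := Submodule.exists_mem_ne_zero_of_ne_bot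
    (Submodule.one_le_finrank_iff.mp (hW ▸ hk))
  have hpos := vnorm_pos hw
  nlinarith [hs w hwW, vnorm_mulVec_le M w]

lemma abs_le_sval_one {M : Matrix β β ℝ} {w : β → ℝ} {L : ℝ} (hw : w ≠ 0)
    (hMw : M *ᵥ w = L • w) : |L| ≤ sval M 1 :=
  le_sval M one_pos _ (finrank_span_singleton hw) fun v hv => by
    obtain ⟨c, rfl⟩ := Submodule.mem_span_singleton.mp hv
    rw [Matrix.mulVec_smul, hMw, smul_smul, vnorm_smul, vnorm_smul, abs_mul]
    exact le_of_eq (by ring)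

/-- `Xᵀ` is injective on any `V` witnessing `t > lam`, hence onto, so some `v ∈ V` has `Xᵀ v = w`;
Cauchy–Schwarz on `‖w‖² = ⟪v, X w⟫` then gives `‖(X Xᵀ) v‖ = ‖X w‖ ≤ lam ‖v‖`. -/
lemma sval_mul_transpose_le (X : Matrix α ρ ℝ) {w : ρ → ℝ} {lam : ℝ} (hlam : 0 ≤ lam)
    (hw : w ≠ 0) (hXw : (Xᵀ * X) *ᵥ w = lam • w) :
    sval (X * Xᵀ) (Fintype.card ρ) ≤ lam := by
  refine Real.sSup_le ?_ hlam
  rintro t ⟨V, hV, ht⟩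
  by_contra! hlt
  let f : V →ₗ[ℝ] (ρ → ℝ) := Xᵀ.mulVecLin ∘ₗ V.subtype
  have hinj : Function.Injective f := by
    refine LinearMap.ker_eq_bot.mp ((Submodule.eq_bot_iff _).mpr fun x hx => ?_)
    have hXx : Xᵀ *ᵥ (x : α → ℝ) = 0 := hx
    have h := ht x x.2
    rw [← Matrix.mulVec_mulVec, hXx, Matrix.mulVec_zero, vnorm_zero] at h
    by_contra hx0
    have := vnorm_pos (Subtype.coe_ne_coe.mpr hx0 : (x : α → ℝ) ≠ 0)
    nlinarith
  obtain ⟨v, hv⟩ := ((LinearMap.injective_iff_surjective_of_finrank_eq_finrank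
    (by rw [hV, Module.finrank_fintype_fun_eq_card])).mp hinj) w
  have hXv : Xᵀ *ᵥ (v : α → ℝ) = w := hv
  have hMv : (X * Xᵀ) *ᵥ (v : α → ℝ) = X *ᵥ w := by rw [← Matrix.mulVec_mulVec, hXv]
  have hXw2 : vnorm (X *ᵥ w) ^ 2 = lam * vnorm w ^ 2 := by
    rw [vnorm_sq, vnorm_sq, dotProduct_mulVec_self, hXw, dotProduct_smul, smul_eq_mul]
  have hw2 : vnorm w ^ 2 ≤ vnorm (v : α → ℝ) * vnorm (X *ᵥ w) := by
    rw [vnorm_sq]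
    calc w ⬝ᵥ w = (v : α → ℝ) ⬝ᵥ (X *ᵥ w) := by
          rw [Matrix.dotProduct_mulVec, ← Matrix.mulVec_transpose, hXv]
      _ ≤ _ := dotProduct_le_vnorm_mul_vnorm _ _
  have htv := ht (v : α → ℝ) v.2
  rw [hMv] at htv
  have hv0 : 0 < vnorm (v : α → ℝ) := vnorm_pos fun h => hw (by rw [← hXv, h, Matrix.mulVec_zero])
  have hw0 := vnorm_pos hw
  nlinarith [mul_le_mul_of_nonneg_right htv (sq_nonneg (vnorm w)), vnorm_nonneg (X *ᵥ w),
    mul_pos hv0 (pow_pos hw0 2)]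

lemma le_sval_mul_transpose (X : Matrix α ρ ℝ) (hρ : 0 < Fintype.card ρ)
    (hX : X.rank = Fintype.card ρ) {lam : ℝ} (hlam : 0 ≤ lam)
    (hXlam : ∀ v, lam * (v ⬝ᵥ v) ≤ (X *ᵥ v) ⬝ᵥ (X *ᵥ v))
    (hGlam : ∀ v, lam * ((X *ᵥ v) ⬝ᵥ (X *ᵥ v)) ≤ ((Xᵀ * X) *ᵥ v) ⬝ᵥ ((Xᵀ * X) *ᵥ v)) :
    lam ≤ sval (X * Xᵀ) (Fintype.card ρ) := by
  refine le_sval _ hρ (LinearMap.range X.mulVecLin) hX ?_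
  rintro _ ⟨w, rfl⟩
  refine mul_vnorm_le_vnorm hlam ?_
  rw [Matrix.mulVecLin_apply, Matrix.mulVec_mulVec, Matrix.mul_assoc, ← Matrix.mulVec_mulVec]
  nlinarith [hXlam ((Xᵀ * X) *ᵥ w), hGlam w]

lemma sqrt_le_sval (X : Matrix α ρ ℝ) (hρ : 0 < Fintype.card ρ) {lam : ℝ} (hlam : 0 ≤ lam)
    (hXlam : ∀ v, lam * (v ⬝ᵥ v) ≤ (X *ᵥ v) ⬝ᵥ (X *ᵥ v)) :
    Real.sqrt lam ≤ sval X (Fintype.card ρ) :=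
  le_sval X hρ ⊤ (by rw [finrank_top, Module.finrank_fintype_fun_eq_card]) fun v _ =>
    mul_vnorm_le_vnorm (Real.sqrt_nonneg lam) (by rw [Real.sq_sqrt hlam]; exact hXlam v)

end SingularValues

section Gram

variable {α ρ : Type*} [Fintype α] [Fintype ρ] [DecidableEq ρ] [Nonempty ρ]

lemma exists_gram_eigenvalue_bounds (X : Matrix α ρ ℝ) (hX : Function.Injective X.mulVec) :
    ∃ lam Lam : ℝ, 0 < lam ∧ lam ≤ Lam ∧ (∃ w ≠ 0, (Xᵀ * X) *ᵥ w = lam • w) ∧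
      (∃ w ≠ 0, (Xᵀ * X) *ᵥ w = Lam • w) ∧
      (∀ v, lam * (v ⬝ᵥ v) ≤ (X *ᵥ v) ⬝ᵥ (X *ᵥ v)) ∧
      (∀ v, lam * ((X *ᵥ v) ⬝ᵥ (X *ᵥ v)) ≤ ((Xᵀ * X) *ᵥ v) ⬝ᵥ ((Xᵀ * X) *ᵥ v)) ∧
      frob (X * Xᵀ) ^ 2 ≤ Fintype.card ρ * Lam ^ 2 := by
  have hGh : (Xᵀ * X).IsHermitian := by
    simpa [Matrix.conjTranspose_eq_transpose_of_trivial] using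
      Matrix.isHermitian_conjTranspose_mul_self X
  obtain ⟨U, d, hU, hU', hG⟩ := exists_orthogonal_diagonalization hGh
  obtain ⟨i₀, hi₀⟩ := Finite.exists_min d
  obtain ⟨i₁, hi₁⟩ := Finite.exists_max d
  have hcol (i : ρ) : (Xᵀ * X) *ᵥ (fun j => U j i) = d i • fun j => U j i := by
    rw [hG]; exact conj_diagonal_mulVec_col hU d i
  have hcol_ne (i : ρ) : (fun j => U j i) ≠ 0 := fun h => by
    simpa [h] using col_dotProduct_self hU i
  have hd (i : ρ) : 0 < d i := by
    by_contra! hdi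
    have hXu : (X *ᵥ fun j => U j i) ⬝ᵥ (X *ᵥ fun j => U j i) ≤ 0 := by
      rw [dotProduct_mulVec_self, hcol, dotProduct_smul, col_dotProduct_self hU, smul_eq_mul,
        mul_one]
      exact hdi
    exact hcol_ne i (hX (by
      rw [Matrix.mulVec_zero, ← dotProduct_self_eq_zero]
      exact le_antisymm hXu (by rw [← vnorm_sq]; positivity)))
  have hquadG (v : ρ → ℝ) : (X *ᵥ v) ⬝ᵥ (X *ᵥ v) = ∑ i, d i * (Uᵀ *ᵥ v) i ^ 2 := by
    rw [dotProduct_mulVec_self, hG, dotProduct_conj_diagonal_mulVec]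
  have hquadG2 (v : ρ → ℝ) :
      ((Xᵀ * X) *ᵥ v) ⬝ᵥ ((Xᵀ * X) *ᵥ v) = ∑ i, (d * d) i * (Uᵀ *ᵥ v) i ^ 2 := by
    rw [dotProduct_mulVec_self, Matrix.transpose_mul, Matrix.transpose_transpose, hG,
      conj_diagonal_mul_conj_diagonal hU, dotProduct_conj_diagonal_mulVec]
  refine ⟨d i₀, d i₁, hd i₀, hi₀ i₁, ⟨_, hcol_ne i₀, hcol i₀⟩, ⟨_, hcol_ne i₁, hcol i₁⟩, fun v => ?_,
    fun v => ?_, ?_⟩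
  · rw [dotProduct_mulVec_self, hG]
    exact le_dotProduct_conj_diagonal_mulVec hU' hi₀ v
  · rw [hquadG, hquadG2, Finset.mul_sum]
    refine Finset.sum_le_sum fun i _ => ?_
    rw [Pi.mul_apply, ← mul_assoc]
    exact mul_le_mul_of_nonneg_right (mul_le_mul_of_nonneg_right (hi₀ i) (hd i).le)
      (sq_nonneg _)
  · rw [frob_sq, mip_mul_transpose_self, hG, frob_conj_diagonal_sq hU]
    calc ∑ i, d i ^ 2 ≤ ∑ _i : ρ, d i₁ ^ 2 :=
          Finset.sum_le_sum fun i _ => pow_le_pow_left₀ (hd i).le (hi₁ i) 2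
      _ = _ := by rw [Finset.sum_const, Finset.card_univ, nsmul_eq_mul]

lemma exists_gram_lower_bound (X : Matrix α ρ ℝ) (hX : X.rank = Fintype.card ρ) :
    ∃ lam : ℝ, 0 < lam ∧ (∀ v, lam * (v ⬝ᵥ v) ≤ (X *ᵥ v) ⬝ᵥ (X *ᵥ v)) ∧
      (∀ v, lam * ((X *ᵥ v) ⬝ᵥ (X *ᵥ v)) ≤ ((Xᵀ * X) *ᵥ v) ⬝ᵥ ((Xᵀ * X) *ᵥ v)) ∧
      Real.sqrt lam ≤ sval X (Fintype.card ρ) ∧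
      0 < sval (X * Xᵀ) 1 / sval (X * Xᵀ) (Fintype.card ρ) ∧
      frob (X * Xᵀ) ≤ Real.sqrt (Fintype.card ρ) *
        (sval (X * Xᵀ) 1 / sval (X * Xᵀ) (Fintype.card ρ)) * lam := by
  have hinj := Matrix.mulVec_injective_of_rank_eq_card hX
  obtain ⟨lam, Lam, hlam, hlamLam, ⟨w₀, hw₀, hGw₀⟩, ⟨w₁, hw₁, hGw₁⟩, hXlam, hGlam, hM⟩ :=
    exists_gram_eigenvalue_bounds X hinj
  have hρ : 0 < Fintype.card ρ := Fintype.card_pos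
  have hσr_le := sval_mul_transpose_le X hlam.le hw₀ hGw₀
  have hσr_pos := hlam.trans_le (le_sval_mul_transpose X hρ hX hlam.le hXlam hGlam)
  have hσ1 : Lam ≤ sval (X * Xᵀ) 1 := by
    refine (le_abs_self Lam).trans (abs_le_sval_one (w := X *ᵥ w₁) ?_ ?_)
    · exact fun h => hw₁ (hinj (by rw [h, Matrix.mulVec_zero]))
    · rw [Matrix.mulVec_mulVec, Matrix.mul_assoc, ← Matrix.mulVec_mulVec, hGw₁,
        Matrix.mulVec_smul]
  have hκ : 0 < sval (X * Xᵀ) 1 / sval (X * Xᵀ) (Fintype.card ρ) :=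
    div_pos (hlam.trans_le (hlamLam.trans hσ1)) hσr_pos
  refine ⟨lam, hlam, hXlam, hGlam, sqrt_le_sval X hρ hlam.le hXlam, hκ, ?_⟩
  have hLam : Lam ≤ sval (X * Xᵀ) 1 / sval (X * Xᵀ) (Fintype.card ρ) * lam := by
    calc Lam ≤ sval (X * Xᵀ) 1 := hσ1
      _ = sval (X * Xᵀ) 1 / sval (X * Xᵀ) (Fintype.card ρ) * sval (X * Xᵀ) (Fintype.card ρ) :=
          (div_mul_cancel₀ _ hσr_pos.ne').symm
      _ ≤ _ := mul_le_mul_of_nonneg_left hσr_le hκ.le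
  have hfrob : frob (X * Xᵀ) ≤ Real.sqrt (Fintype.card ρ) * Lam := by
    refine (pow_le_pow_iff_left₀ (frob_nonneg _)
      (mul_nonneg (Real.sqrt_nonneg _) (hlam.le.trans hlamLam)) two_ne_zero).mp ?_
    rwa [mul_pow, Real.sq_sqrt (Nat.cast_nonneg _)]
  rw [mul_assoc]
  exact hfrob.trans (mul_le_mul_of_nonneg_left hLam (Real.sqrt_nonneg _))

end Gram

section Procrustes

variable {α ρ : Type*} [Fintype α] [Fintype ρ]

lemma neg_frob_mul_le_dotProduct_mulVec (E : Matrix α α ℝ) (x : α → ℝ) :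
    -(frob E * (x ⬝ᵥ x)) ≤ x ⬝ᵥ (E *ᵥ x) := by
  have hcs := dotProduct_le_vnorm_mul_vnorm (-x) (E *ᵥ x)
  have hneg : vnorm (-x) = vnorm x := by simpa using vnorm_smul (-1) x
  rw [neg_dotProduct, hneg] at hcs
  have hE := mul_le_mul_of_nonneg_left (vnorm_mulVec_le E x) (vnorm_nonneg x)
  rw [← vnorm_sq]
  nlinarith

lemma two_mul_frob_sub_sq_le {U V : Matrix α ρ ℝ} {μ : ℝ} (hS : (Vᵀ * U)ᵀ = Vᵀ * U)
    (hSμ : ∀ v, μ * (v ⬝ᵥ v) ≤ v ⬝ᵥ ((Vᵀ * U) *ᵥ v)) :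
    2 * μ * frob (U - V) ^ 2 ≤ frob (U * Uᵀ - V * Vᵀ) ^ 2 := by
  set S := Vᵀ * U with hSdef
  have hUV : Uᵀ * V = S := by rw [← hS, hSdef, Matrix.transpose_mul, Matrix.transpose_transpose]
  have hgap : frob (U * Uᵀ - V * Vᵀ) ^ 2 =
      frob (Uᵀ * U) ^ 2 - 2 * frob S ^ 2 + frob (Vᵀ * V) ^ 2 := by
    rw [frob_sub_sq, frob_sq, frob_sq, mip_mul_transpose_self, mip_mul_transpose_self,
      mip_mul_transpose_self, hUV]
  have hΔ : (U - V)ᵀ * (U - V) = Uᵀ * U - S - S + Vᵀ * V := by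
    rw [Matrix.transpose_sub, Matrix.sub_mul, Matrix.mul_sub, Matrix.mul_sub, hUV, ← hSdef]
    abel
  have hΔS : mip ((U - V)ᵀ * (U - V)) S = mip (Uᵀ * U) S - 2 * frob S ^ 2 + mip (Vᵀ * V) S := by
    rw [hΔ, mip_add_left, mip_sub_left, mip_sub_left, frob_sq]; ring
  have hlow : μ * frob (U - V) ^ 2 ≤ mip ((U - V)ᵀ * (U - V)) S := by
    rw [mip_transpose_mul_self, frob_sq, mip_eq_sum_dotProduct, Finset.mul_sum]
    exact Finset.sum_le_sum fun i _ => hSμ _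
  nlinarith [frob_sub_sq (Uᵀ * U) S, frob_sub_sq (Vᵀ * V) S, sq_nonneg (frob (Uᵀ * U - S)),
    sq_nonneg (frob (Vᵀ * V - S)), frob_sq (Uᵀ * U), frob_sq (Vᵀ * V)]

lemma sq_half_mul_le_dotProduct_mulVec {U X : Matrix α ρ ℝ} {lam : ℝ}
    (hXlam : ∀ v, lam * (v ⬝ᵥ v) ≤ (X *ᵥ v) ⬝ᵥ (X *ᵥ v))
    (hGlam : ∀ v, lam * ((X *ᵥ v) ⬝ᵥ (X *ᵥ v)) ≤ ((Xᵀ * X) *ᵥ v) ⬝ᵥ ((Xᵀ * X) *ᵥ v))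
    (hE : 2 * frob (U * Uᵀ - X * Xᵀ) ≤ lam) (v : ρ → ℝ) :
    (lam / 2) ^ 2 * (v ⬝ᵥ v) ≤ v ⬝ᵥ (((Xᵀ * U) * (Xᵀ * U)ᵀ) *ᵥ v) := by
  set E := U * Uᵀ - X * Xᵀ with hEdef
  have hquad : v ⬝ᵥ (((Xᵀ * U) * (Xᵀ * U)ᵀ) *ᵥ v) =
      ((Xᵀ * X) *ᵥ v) ⬝ᵥ ((Xᵀ * X) *ᵥ v) + (X *ᵥ v) ⬝ᵥ (E *ᵥ (X *ᵥ v)) := by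
    have hUU : U * Uᵀ = X * Xᵀ + E := by rw [hEdef, add_sub_cancel]
    rw [Matrix.transpose_mul, Matrix.transpose_transpose, Matrix.mul_assoc,
      ← Matrix.mul_assoc U, hUU, ← Matrix.mul_assoc, dotProduct_transpose_mul_mul_mulVec,
      Matrix.add_mulVec, dotProduct_add, ← Matrix.mulVec_mulVec, Matrix.dotProduct_mulVec,
      ← Matrix.mulVec_transpose, Matrix.mulVec_mulVec]
  have hvv : 0 ≤ v ⬝ᵥ v := by rw [← vnorm_sq]; positivity
  have hc : (lam / 2) ^ 2 ≤ (lam - frob E) * lam := by nlinarith [frob_nonneg E]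
  rw [hquad]
  calc (lam / 2) ^ 2 * (v ⬝ᵥ v) ≤ (lam - frob E) * (lam * (v ⬝ᵥ v)) := by
        rw [← mul_assoc]; exact mul_le_mul_of_nonneg_right hc hvv
    _ ≤ (lam - frob E) * ((X *ᵥ v) ⬝ᵥ (X *ᵥ v)) :=
        mul_le_mul_of_nonneg_left (hXlam v) (by linarith [frob_nonneg E])
    _ ≤ _ := by linarith [hGlam v, neg_frob_mul_le_dotProduct_mulVec E (X *ᵥ v)]

variable [DecidableEq ρ]

lemma exists_symm_sqrt {C : Matrix ρ ρ ℝ} (hC : C.IsHermitian) {μ : ℝ} (hμ : 0 < μ)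
    (hCμ : ∀ v, μ ^ 2 * (v ⬝ᵥ v) ≤ v ⬝ᵥ (C *ᵥ v)) :
    ∃ P Q : Matrix ρ ρ ℝ, Pᵀ = P ∧ Qᵀ = Q ∧ P * P = C ∧ Q * P = 1 ∧
      ∀ v, μ * (v ⬝ᵥ v) ≤ v ⬝ᵥ (P *ᵥ v) := by
  obtain ⟨W, p, hW, hW', hCW⟩ := exists_orthogonal_diagonalization hC
  have hp (i : ρ) : μ ^ 2 ≤ p i := by
    have h := hCμ fun j => W j i
    rwa [hCW, conj_diagonal_mulVec_col hW, dotProduct_smul, col_dotProduct_self hW, smul_eq_mul,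
      mul_one, mul_one] at h
  have hsqrt (i : ρ) : μ ≤ Real.sqrt (p i) := Real.le_sqrt_of_sq_le (hp i)
  have hsqrt_pos (i : ρ) : 0 < Real.sqrt (p i) := hμ.trans_le (hsqrt i)
  refine ⟨W * diagonal (fun i => Real.sqrt (p i)) * Wᵀ,
    W * diagonal (fun i => (Real.sqrt (p i))⁻¹) * Wᵀ, transpose_conj_diagonal _,
    transpose_conj_diagonal _, ?_, ?_, le_dotProduct_conj_diagonal_mulVec hW' hsqrt⟩
  · have h : (fun i => Real.sqrt (p i)) * (fun i => Real.sqrt (p i)) = p :=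
      funext fun i => Real.mul_self_sqrt ((sq_nonneg μ).trans (hp i))
    rw [conj_diagonal_mul_conj_diagonal hW, h, hCW]
  · have h : (fun i => (Real.sqrt (p i))⁻¹) * (fun i => Real.sqrt (p i)) = fun _ => 1 :=
      funext fun i => inv_mul_cancel₀ (hsqrt_pos i).ne'
    rw [conj_diagonal_mul_conj_diagonal hW, h, Matrix.diagonal_one, Matrix.mul_one, hW']

lemma exists_orthogonal_symm_transpose_mul {S₀ : Matrix ρ ρ ℝ} {μ : ℝ} (hμ : 0 < μ)
    (hS₀ : ∀ v, μ ^ 2 * (v ⬝ᵥ v) ≤ v ⬝ᵥ ((S₀ * S₀ᵀ) *ᵥ v)) :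
    ∃ R : Matrix ρ ρ ℝ, Rᵀ * R = 1 ∧ (Rᵀ * S₀)ᵀ = Rᵀ * S₀ ∧
      ∀ v, μ * (v ⬝ᵥ v) ≤ v ⬝ᵥ ((Rᵀ * S₀) *ᵥ v) := by
  have hC : (S₀ * S₀ᵀ).IsHermitian := by
    simpa [Matrix.conjTranspose_eq_transpose_of_trivial] using
      Matrix.isHermitian_mul_conjTranspose_self S₀
  obtain ⟨P, Q, hP, hQ, hPP, hQP, hPμ⟩ := exists_symm_sqrt hC hμ hS₀
  have hPQ : P * Q = 1 := mul_eq_one_comm.mp hQP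
  have hS₀P : S₀ = P * (Q * S₀) := by rw [← Matrix.mul_assoc, hPQ, Matrix.one_mul]
  have hR : (Q * S₀)ᵀ * (Q * S₀) = 1 := by
    refine mul_eq_one_comm.mp ?_
    calc Q * S₀ * (Q * S₀)ᵀ = Q * (S₀ * S₀ᵀ) * Q := by
          simp only [Matrix.transpose_mul, hQ, Matrix.mul_assoc]
      _ = 1 := by rw [← hPP, ← Matrix.mul_assoc, hQP, Matrix.one_mul, hPQ]
  have hRS : (Q * S₀)ᵀ * S₀ = (Q * S₀)ᵀ * P * (Q * S₀) := by
    nth_rw 2 [hS₀P]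
    rw [Matrix.mul_assoc]
  refine ⟨Q * S₀, hR, ?_, fun v => ?_⟩
  · rw [hRS]
    simp only [Matrix.transpose_mul, Matrix.transpose_transpose, hP, Matrix.mul_assoc]
  · have hRv : ((Q * S₀) *ᵥ v) ⬝ᵥ ((Q * S₀) *ᵥ v) = v ⬝ᵥ v := by
      rw [dotProduct_mulVec_self, hR, Matrix.one_mulVec]
    rw [hRS, ← Matrix.mulVec_mulVec, ← Matrix.mulVec_mulVec, Matrix.dotProduct_mulVec,
      Matrix.vecMul_transpose, ← hRv]
    exact hPμ _

lemma pdist_le_frob {U X : Matrix α ρ ℝ} {R : Matrix ρ ρ ℝ} (hR : Rᵀ * R = 1) :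
    pdist U X ≤ frob (U - X * R) :=
  csInf_le ⟨0, by rintro _ ⟨R', -, rfl⟩; exact frob_nonneg _⟩ ⟨R, hR, rfl⟩

lemma pdist_nonneg (U X : Matrix α ρ ℝ) : 0 ≤ pdist U X :=
  Real.sInf_nonneg (by rintro _ ⟨R, -, rfl⟩; exact frob_nonneg _)

lemma lam_mul_pdist_sq_le {U X : Matrix α ρ ℝ} {lam : ℝ} (hlam : 0 < lam)
    (hXlam : ∀ v, lam * (v ⬝ᵥ v) ≤ (X *ᵥ v) ⬝ᵥ (X *ᵥ v))
    (hGlam : ∀ v, lam * ((X *ᵥ v) ⬝ᵥ (X *ᵥ v)) ≤ ((Xᵀ * X) *ᵥ v) ⬝ᵥ ((Xᵀ * X) *ᵥ v))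
    (hE : 2 * frob (U * Uᵀ - X * Xᵀ) ≤ lam) :
    lam * pdist U X ^ 2 ≤ frob (U * Uᵀ - X * Xᵀ) ^ 2 := by
  obtain ⟨R, hR, hS, hSμ⟩ := exists_orthogonal_symm_transpose_mul (half_pos hlam)
    (sq_half_mul_le_dotProduct_mulVec hXlam hGlam hE)
  have hVV : X * R * (X * R)ᵀ = X * Xᵀ := by
    rw [Matrix.transpose_mul, Matrix.mul_assoc, ← Matrix.mul_assoc R, mul_eq_one_comm.mp hR,
      Matrix.one_mul]
  have hVU : (X * R)ᵀ * U = Rᵀ * (Xᵀ * U) := by rw [Matrix.transpose_mul, Matrix.mul_assoc]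
  have hbound := two_mul_frob_sub_sq_le (U := U) (V := X * R) (μ := lam / 2) (hVU ▸ hS)
    (hVU ▸ hSμ)
  rw [hVV] at hbound
  have hpd := pdist_le_frob (U := U) (X := X) hR
  nlinarith [pow_le_pow_left₀ (pdist_nonneg U X) hpd 2]

end Procrustes

section ProjectedGradient

variable {m n₁ n₂ : ℕ} {A : Fin m → Matrix (Fin n₁) (Fin n₂) ℝ} {s : ℕ} {δ : ℝ}

lemma mapA_add (W Z : Matrix (Fin n₁) (Fin n₂) ℝ) (k : Fin m) :
    mapA A (W + Z) k = mapA A W k + mapA A Z k := mip_add_right _ _ _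

lemma mapA_sub (W Z : Matrix (Fin n₁) (Fin n₂) ℝ) (k : Fin m) :
    mapA A (W - Z) k = mapA A W k - mapA A Z k := mip_sub_right _ _ _

lemma HasRIP.mip_sub_le (hRIP : HasRIP A s δ) {W Z : Matrix (Fin n₁) (Fin n₂) ℝ}
    (hWZ : W.rank + Z.rank ≤ s) :
    mip W Z - ∑ k, mapA A W k * mapA A Z k ≤ δ / 2 * (frob W ^ 2 + frob Z ^ 2) := by
  have hlow := (hRIP (W + Z) ((Matrix.rank_add_le W Z).trans hWZ)).1
  have hupp := (hRIP (W - Z) ((Matrix.rank_sub_le W Z).trans hWZ)).2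
  have hpol : ∑ k, mapA A (W + Z) k ^ 2 - ∑ k, mapA A (W - Z) k ^ 2 =
      4 * ∑ k, mapA A W k * mapA A Z k := by
    rw [← Finset.sum_sub_distrib, Finset.mul_sum]
    exact Finset.sum_congr rfl fun k _ => by rw [mapA_add, mapA_sub]; ring
  rw [frob_add_sq] at hlow
  rw [frob_sub_sq] at hupp
  nlinarith

lemma HasRIP.one_sub_mul_frob_sq_sub_le (hRIP : HasRIP A s δ)
    {M M' Mstar : Matrix (Fin n₁) (Fin n₂) ℝ} (hrank : (M' - Mstar).rank + (M - Mstar).rank ≤ s)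
    (hmin : frob (M' - (M - ∑ k, (mapA A M k - mapA A Mstar k) • A k)) ≤
      frob (Mstar - (M - ∑ k, (mapA A M k - mapA A Mstar k) • A k))) :
    (1 - δ) * frob (M' - Mstar) ^ 2 ≤ δ * frob (M - Mstar) ^ 2 := by
  set W := M' - Mstar
  set Z := M - Mstar
  set G := M - ∑ k, (mapA A M k - mapA A Mstar k) • A k
  have hC : Mstar - G = ∑ k, mapA A Z k • A k - Z := by
    simp only [G, Z, mapA_sub]; abel
  have hWC : mip W (∑ k, mapA A Z k • A k - Z) = ∑ k, mapA A W k * mapA A Z k - mip W Z := by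
    rw [mip_sub_right, mip_sum_right]
    congr 1
    exact Finset.sum_congr rfl fun k _ => by rw [mip_smul_right, mapA, mapA, mip_comm W, mul_comm]
  have hsq := pow_le_pow_left₀ (frob_nonneg _) hmin 2
  rw [← sub_add_sub_cancel M' Mstar G, hC, frob_add_sq, hWC] at hsq
  nlinarith [hRIP.mip_sub_le hrank]

end ProjectedGradient

def IsPSDProjGradStep {m n : ℕ} (A : Fin m → Matrix (Fin n) (Fin n) ℝ) (b : Fin m → ℝ) (r : ℕ)
    (M M' : Matrix (Fin n) (Fin n) ℝ) : Prop :=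
  M'.PosSemidef ∧ M'.rank ≤ r ∧ ∀ N : Matrix (Fin n) (Fin n) ℝ, N.PosSemidef → N.rank ≤ r →
    frob (M' - (M - ∑ k, (mapA A M k - b k) • A k)) ≤
      frob (N - (M - ∑ k, (mapA A M k - b k) • A k))

lemma frob_sq_iterate_sub_le {m n r s : ℕ} {A : Fin m → Matrix (Fin n) (Fin n) ℝ} {δ q : ℝ}
    (hRIP : HasRIP A s δ) (hs : 4 * r ≤ s) (hq : 0 ≤ q) (hδq : δ ≤ q * (1 - δ))
    {Mstar : Matrix (Fin n) (Fin n) ℝ} (hpsd : Mstar.PosSemidef) (hrank : Mstar.rank ≤ r)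
    {Mt : ℕ → Matrix (Fin n) (Fin n) ℝ} (h0 : Mt 0 = 0)
    (hstep : ∀ τ, IsPSDProjGradStep A (mapA A Mstar) r (Mt τ) (Mt (τ + 1))) (τ : ℕ) :
    frob (Mt τ - Mstar) ^ 2 ≤ q ^ τ * frob Mstar ^ 2 := by
  have hrankMt (τ : ℕ) : (Mt τ).rank ≤ r := by
    cases τ with
    | zero => simp [h0]
    | succ τ => exact (hstep τ).2.1
  have hδ : δ < 1 := by by_contra! h; nlinarith
  induction τ with
  | zero => simp [h0, frob_neg]
  | succ τ ih =>
    have hcontr := hRIP.one_sub_mul_frob_sq_sub_le (M := Mt τ) (M' := Mt (τ + 1))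
      (by linarith [Matrix.rank_sub_le (Mt (τ + 1)) Mstar, Matrix.rank_sub_le (Mt τ) Mstar,
        hrankMt τ, hrankMt (τ + 1)]) ((hstep τ).2.2 Mstar hpsd hrank)
    have h1 : frob (Mt (τ + 1) - Mstar) ^ 2 ≤ q * frob (Mt τ - Mstar) ^ 2 := by
      nlinarith [sq_nonneg (frob (Mt τ - Mstar)), sq_nonneg (frob (Mt (τ + 1) - Mstar))]
    calc _ ≤ q * frob (Mt τ - Mstar) ^ 2 := h1
      _ ≤ q * (q ^ τ * frob Mstar ^ 2) := mul_le_mul_of_nonneg_left ih hq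
      _ = _ := by ring

lemma le_three_pow_div_four {a : ℝ} {T : ℕ} (ha : 0 < a) (hT : Real.log a + 2 ≤ T) :
    a ≤ 3 ^ T / 4 := by
  have he2 : 4 ≤ Real.exp 2 := by
    rw [show (2 : ℝ) = 1 + 1 by norm_num, Real.exp_add]
    nlinarith [Real.exp_one_gt_d9]
  have heT : Real.exp T ≤ 3 ^ T := by
    rw [← Real.exp_one_pow]
    exact pow_le_pow_left₀ (Real.exp_pos 1).le (Real.exp_one_lt_d9.le.trans (by norm_num)) T
  calc a = Real.exp (Real.log a) := (Real.exp_log ha).symm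
    _ ≤ Real.exp (T - 2) := Real.exp_le_exp.mpr (by linarith)
    _ = Real.exp T / Real.exp 2 := Real.exp_sub _ _
    _ ≤ 3 ^ T / 4 := div_le_div₀ (by positivity) heT (by norm_num) he2

lemma four_mul_le_of_sq_le_ninth_pow {x y lam : ℝ} {T : ℕ} (hx0 : 0 ≤ x) (hlam : 0 ≤ lam)
    (hx : x ^ 2 ≤ (1 / 9) ^ T * y ^ 2) (hy0 : 0 ≤ y) (hy : y ≤ 3 ^ T / 4 * lam) :
    4 * x ≤ lam := by
  have h9 : ((1 : ℝ) / 9) ^ T * (3 ^ T) ^ 2 = 1 := by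
    rw [← pow_mul, pow_mul', ← mul_pow]; norm_num
  refine (pow_le_pow_iff_left₀ (by positivity) hlam two_ne_zero).mp ?_
  calc (4 * x) ^ 2 ≤ 16 * ((1 / 9) ^ T * y ^ 2) := by linarith
    _ ≤ 16 * ((1 / 9) ^ T * (3 ^ T / 4 * lam) ^ 2) := by gcongr
    _ = ((1 / 9) ^ T * (3 ^ T) ^ 2) * lam ^ 2 := by ring
    _ = lam ^ 2 := by rw [h9, one_mul]

/-- Procrustes Flow initialization, PSD case. -/
theorem procrustes_flow_psd_initialization {n r m : ℕ}
    (A : Fin m → Matrix (Fin n) (Fin n) ℝ)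
    (X : Matrix (Fin n) (Fin r) ℝ)
    (hrank : (X * Xᵀ).rank = r)
    (δ : ℝ) (hRIP : HasRIP A (6 * r) δ) (hδ : δ ≤ 1 / 10)
    (Mt : ℕ → Matrix (Fin n) (Fin n) ℝ) (h0 : Mt 0 = 0)
    (hstep : ∀ τ : ℕ,
      (Mt (τ + 1)).PosSemidef ∧ (Mt (τ + 1)).rank ≤ r ∧
      ∀ N : Matrix (Fin n) (Fin n) ℝ, N.PosSemidef → N.rank ≤ r →
        frob (Mt (τ + 1) - (Mt τ - ∑ k, (mapA A (Mt τ) k - mapA A (X * Xᵀ) k) • A k)) ≤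
          frob (N - (Mt τ - ∑ k, (mapA A (Mt τ) k - mapA A (X * Xᵀ) k) • A k)))
    (T₀ : ℕ)
    (hT : Real.log (Real.sqrt r * (sval (X * Xᵀ) 1 / sval (X * Xᵀ) r)) + 2 ≤ (T₀ : ℝ))
    (U₀ : Matrix (Fin n) (Fin r) ℝ) (hU₀ : U₀ * U₀ᵀ = Mt T₀) :
    pdist U₀ X ≤ (1 / 4) * sval X r := by
  rcases Nat.eq_zero_or_pos r with rfl | hr
  · simpa [frob, sval_zero] using pdist_le_frob (U := U₀) (X := X) (R := 1) (by simp)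
  have : Nonempty (Fin r) := ⟨⟨0, hr⟩⟩
  obtain ⟨lam, hlam, hXlam, hGlam, hσX, hκ, hM⟩ := exists_gram_lower_bound X
    (by rw [Fintype.card_fin, ← Matrix.rank_self_mul_transpose]; exact hrank)
  simp only [Fintype.card_fin] at hσX hκ hM
  have hpsd : (X * Xᵀ).PosSemidef := by
    simpa [Matrix.conjTranspose_eq_transpose_of_trivial] using
      Matrix.posSemidef_self_mul_conjTranspose X
  have hdecay := frob_sq_iterate_sub_le hRIP (by omega) (by norm_num : (0 : ℝ) ≤ 1 / 9)
    (by linarith) hpsd hrank.le h0 hstep T₀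
  have hE : 4 * frob (U₀ * U₀ᵀ - X * Xᵀ) ≤ lam := by
    rw [hU₀]
    refine four_mul_le_of_sq_le_ninth_pow (frob_nonneg _) hlam.le hdecay (frob_nonneg _)
      (hM.trans (mul_le_mul_of_nonneg_right (le_three_pow_div_four (by positivity) hT) hlam.le))
  have hpd := lam_mul_pdist_sq_le hlam hXlam hGlam
    (by linarith [frob_nonneg (U₀ * U₀ᵀ - X * Xᵀ)])
  have hsq : pdist U₀ X ^ 2 ≤ (Real.sqrt lam / 4) ^ 2 := by
    rw [div_pow, Real.sq_sqrt hlam.le]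
    nlinarith [frob_nonneg (U₀ * U₀ᵀ - X * Xᵀ)]
  have hdist := (pow_le_pow_iff_left₀ (pdist_nonneg U₀ X) (by positivity) two_ne_zero).mp hsq
  linarith
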